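/- The number of parking functions of size n whose parking permutation avoids 132, 231, and 321 equals ∑_{k=1}^n n!/k. -/

import Mathlib

open Finset

noncomputable section

/-- The parking process over the first `k` cars (cars are `0,...,k-1`, i.e. cars `1,...,k`
in 1-indexed terms): returns `some occ` where `occ` maps each spot to the car parked there
(`none` meaning empty), or `none` if some car failed to park.  Car `c` drives to its
preferred spot `f c` and parks at the first free spot with index `≥ f c`, failing if
no such spot exists. -/
def parkAux {n : ℕ} (f : Fin n → Fin n) : ℕ → Option (Fin n → Option (Fin n))
  | 0 => some fun _ => none
  | k + 1 =>
    (parkAux f k).bind fun occ =>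
      if h : k < n then
        if hS : (Finset.univ.filter fun s => f ⟨k, h⟩ ≤ s ∧ occ s = none).Nonempty then
          some (Function.update occ
            ((Finset.univ.filter fun s => f ⟨k, h⟩ ≤ s ∧ occ s = none).min' hS)
            (some ⟨k, h⟩))
        else none
      else some occ

/-- All `n` cars park successfully. -/
def AllPark {n : ℕ} (f : Fin n → Fin n) : Prop := (parkAux f n).isSome

/-- `f` is a parking function: for every `i ∈ [n]`, at least `i` cars prefer
the first `i` spots.  (Here `i : Fin n` denotes the `(i+1)`-st spot, 0-indexed.) -/
def IsParkingFunction {n : ℕ} (f : Fin n → Fin n) : Prop :=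
  ∀ i : Fin n, i.val + 1 ≤ (Finset.univ.filter fun j => f j ≤ i).card

/-- `ρ` is the parking permutation of `f`: after all cars have parked,
spot `i` is occupied by car `ρ i`. -/
def IsParkingPerm {n : ℕ} (f : Fin n → Fin n) (ρ : Equiv.Perm (Fin n)) : Prop :=
  parkAux f n = some fun i => some (ρ i)

/-- `π` contains `σ` as a pattern. -/
def ContainsPattern {n m : ℕ} (π : Equiv.Perm (Fin n)) (σ : Equiv.Perm (Fin m)) : Prop :=
  ∃ g : Fin m → Fin n, StrictMono g ∧ ∀ a b : Fin m, σ a < σ b ↔ π (g a) < π (g b)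

/-- `ρ` avoids every pattern in the list `pats`. -/
def AvoidsAll {n : ℕ} (ρ : Equiv.Perm (Fin n)) (pats : List (Equiv.Perm (Fin 3))) : Prop :=
  ∀ σ ∈ pats, ¬ ContainsPattern ρ σ

/-- The number of parking functions of size `n` whose parking permutation avoids
all patterns in `pats`. -/
def pk (n : ℕ) (pats : List (Equiv.Perm (Fin 3))) : ℕ :=
  Nat.card {f : Fin n → Fin n // IsParkingFunction f ∧
    ∃ ρ : Equiv.Perm (Fin n), IsParkingPerm f ρ ∧ AvoidsAll ρ pats}

def p123 : Equiv.Perm (Fin 3) := Equiv.ofBijective ![0, 1, 2] (by decide)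
def p132 : Equiv.Perm (Fin 3) := Equiv.ofBijective ![0, 2, 1] (by decide)
def p213 : Equiv.Perm (Fin 3) := Equiv.ofBijective ![1, 0, 2] (by decide)
def p231 : Equiv.Perm (Fin 3) := Equiv.ofBijective ![1, 2, 0] (by decide)
def p312 : Equiv.Perm (Fin 3) := Equiv.ofBijective ![2, 0, 1] (by decide)
def p321 : Equiv.Perm (Fin 3) := Equiv.ofBijective ![2, 1, 0] (by decide)

/-!
Parking with final permutation `ρ` (spot `s` holds car `ρ s`) is checked car by car: car `c`
ends in spot `ρ⁻¹ c` iff its preference `x` satisfies `x ≤ ρ⁻¹ c` and every spot in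
`[x, ρ⁻¹ c)` is held by an earlier car. These conditions are independent across cars, so the
parking functions with permutation `ρ` form a product set, and every such function is a
parking function.

A permutation avoids 132, 231 and 321 iff it increases after its first entry `m`, i.e. it is
`(m, 0, 1, …, m-1, m+1, …, n-1)`, the inverse of `Fin.cycleRange m`. For it, car `m` must
prefer spot `0`, a car `c < m` any spot in `[1, c+1]` and a car `c > m` any spot in `[0, c]`:
that is `n! / (m+1)` parking functions, and summing over `m` gives `∑ n! / k`.
-/

open Equiv Function

section Parking

variable {n : ℕ}

/-- The state `parkAux f k` must reach if `ρ` is to be the parking permutation of `f`. -/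
def occupancyBefore (ρ : Perm (Fin n)) (k : ℕ) (s : Fin n) : Option (Fin n) :=
  if (ρ s : ℕ) < k then some (ρ s) else none

def admissiblePrefs (ρ : Perm (Fin n)) (c : Fin n) : Finset (Fin n) :=
  univ.filter fun x => x ≤ ρ.symm c ∧ ∀ s, x ≤ s → s < ρ.symm c → ρ s < c

theorem occupancyBefore_zero (ρ : Perm (Fin n)) : occupancyBefore ρ 0 = fun _ => none := by
  funext s
  simp [occupancyBefore]

theorem occupancyBefore_self (ρ : Perm (Fin n)) :
    occupancyBefore ρ n = fun s => some (ρ s) := by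
  funext s
  simp [occupancyBefore]

theorem occupancyBefore_eq_none {ρ : Perm (Fin n)} {k : ℕ} {s : Fin n} :
    occupancyBefore ρ k s = none ↔ k ≤ ρ s := by
  simp [occupancyBefore]

theorem apply_eq_of_occupancyBefore_eq_some {ρ : Perm (Fin n)} {k : ℕ} {s c : Fin n}
    (h : occupancyBefore ρ k s = some c) : ρ s = c := by
  unfold occupancyBefore at h
  split_ifs at h
  exact Option.some.inj h

theorem update_occupancyBefore (ρ : Perm (Fin n)) (c : Fin n) :
    update (occupancyBefore ρ c) (ρ.symm c) (some c) = occupancyBefore ρ (c + 1) := by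
  funext s
  rcases eq_or_ne s (ρ.symm c) with rfl | hs
  · simp [occupancyBefore]
  · have hρs : (ρ s : ℕ) ≠ c := Fin.val_ne_of_ne fun h => hs (ρ.eq_symm_apply.mpr h)
    rw [update_of_ne hs]
    unfold occupancyBefore
    split_ifs <;> first | rfl | omega

theorem isLeast_symm_apply_iff_mem_admissiblePrefs (ρ : Perm (Fin n)) (c x : Fin n) :
    IsLeast {s | x ≤ s ∧ occupancyBefore ρ c s = none} (ρ.symm c) ↔
      x ∈ admissiblePrefs ρ c := by
  simp only [IsLeast, lowerBounds, admissiblePrefs, Set.mem_ofPred_eq, occupancyBefore_eq_none,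
    apply_symm_apply, le_refl, and_true, mem_filter, mem_univ, true_and]
  refine and_congr_right fun _ => ⟨fun hmin s hxs hs => ?_, fun hfree s ⟨hxs, hs⟩ => ?_⟩
  · by_contra! h
    exact (hmin ⟨hxs, h⟩).not_gt hs
  · by_contra! h
    exact (hfree s hxs h).not_ge hs

theorem parkAux_succ_eq_some_iff {f : Fin n → Fin n} {c : Fin n}
    {occ occ' : Fin n → Option (Fin n)} (hc : parkAux f c = some occ) :
    parkAux f (c + 1) = some occ' ↔
      ∃ t, IsLeast {s | f c ≤ s ∧ occ s = none} t ∧ occ' = update occ t (some c) := by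
  rw [parkAux, hc, Option.bind_some, dif_pos c.isLt]
  split_ifs with hS
  · have hmin := isLeast_min' _ hS
    rw [coe_filter] at hmin
    simp only [mem_univ, true_and, Fin.eta] at hmin ⊢
    refine ⟨fun h => ⟨_, hmin, (Option.some.inj h).symm⟩, ?_⟩
    rintro ⟨t, ht, rfl⟩
    rw [ht.unique hmin]
  · simp only [false_iff, not_exists, not_and]
    exact fun t ht _ => hS ⟨t, by simpa using ht.1⟩

theorem exists_parkAux_eq_some_of_le {f : Fin n → Fin n} {k l : ℕ} (hkl : k ≤ l)
    (hl : l ≤ n) {occ' : Fin n → Option (Fin n)} (h : parkAux f l = some occ') :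
    ∃ occ, parkAux f k = some occ ∧ ∀ s c, occ s = some c → occ' s = some c := by
  induction l generalizing occ' with
  | zero => exact ⟨occ', by rwa [Nat.le_zero.mp hkl], fun _ _ => id⟩
  | succ l ih =>
    rcases hkl.eq_or_lt with rfl | hkl
    · exact ⟨occ', h, fun _ _ => id⟩
    obtain ⟨occ, hocc⟩ : ∃ occ, parkAux f l = some occ := by
      cases hl' : parkAux f l with
      | none => rw [parkAux, hl'] at h; cases h
      | some occ => exact ⟨occ, rfl⟩
    obtain ⟨t, ht, rfl⟩ := (parkAux_succ_eq_some_iff (c := ⟨l, hl⟩) hocc).mp h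
    obtain ⟨occ₀, h₀, hle⟩ := ih (by omega) (by omega) hocc
    refine ⟨occ₀, h₀, fun s c hs => ?_⟩
    have hst : s ≠ t := by
      rintro rfl
      have hfree := ht.1.2
      rw [hle s c hs] at hfree
      cases hfree
    rw [update_of_ne hst]
    exact hle s c hs

theorem parkAux_eq_occupancyBefore_of_forall_mem {f : Fin n → Fin n} {ρ : Perm (Fin n)}
    (hf : ∀ c, f c ∈ admissiblePrefs ρ c) {k : ℕ} (hk : k ≤ n) :
    parkAux f k = some (occupancyBefore ρ k) := by
  induction k with
  | zero => rw [occupancyBefore_zero]; rfl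
  | succ k ih =>
    let c : Fin n := ⟨k, hk⟩
    exact (parkAux_succ_eq_some_iff (c := c) (ih (by omega))).mpr
      ⟨ρ.symm c, (isLeast_symm_apply_iff_mem_admissiblePrefs ρ c (f c)).mpr (hf c),
        (update_occupancyBefore ρ c).symm⟩

theorem IsParkingPerm.parkAux_eq_occupancyBefore {f : Fin n → Fin n} {ρ : Perm (Fin n)}
    (hρ : IsParkingPerm f ρ) {k : ℕ} (hk : k ≤ n) :
    parkAux f k = some (occupancyBefore ρ k) := by
  rw [IsParkingPerm, ← occupancyBefore_self] at hρ
  induction k with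
  | zero => rw [occupancyBefore_zero]; rfl
  | succ k ih =>
    let c : Fin n := ⟨k, hk⟩
    obtain ⟨occ', h', hle⟩ := exists_parkAux_eq_some_of_le hk le_rfl hρ
    obtain ⟨t, -, rfl⟩ := (parkAux_succ_eq_some_iff (c := c) (ih (by omega))).mp h'
    have ht : t = ρ.symm c :=
      ρ.eq_symm_apply.mpr (apply_eq_of_occupancyBefore_eq_some (hle t c (update_self ..)))
    rw [h', ht]
    exact congrArg some (update_occupancyBefore ρ c)

theorem isParkingPerm_iff {f : Fin n → Fin n} {ρ : Perm (Fin n)} :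
    IsParkingPerm f ρ ↔ ∀ c, f c ∈ admissiblePrefs ρ c := by
  refine ⟨fun hρ c => ?_, fun hf => ?_⟩
  · obtain ⟨t, ht, hupd⟩ := (parkAux_succ_eq_some_iff
      (hρ.parkAux_eq_occupancyBefore c.isLt.le)).mp (hρ.parkAux_eq_occupancyBefore c.isLt)
    have htc : t = ρ.symm c := ρ.eq_symm_apply.mpr
      (apply_eq_of_occupancyBefore_eq_some (by rw [hupd, update_self]))
    rw [← isLeast_symm_apply_iff_mem_admissiblePrefs, ← htc]
    exact ht
  · rw [IsParkingPerm, ← occupancyBefore_self]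
    exact parkAux_eq_occupancyBefore_of_forall_mem hf le_rfl

theorem IsParkingPerm.isParkingFunction {f : Fin n → Fin n} {ρ : Perm (Fin n)}
    (hρ : IsParkingPerm f ρ) : IsParkingFunction f := by
  intro i
  rw [← Fin.card_Iic]
  refine card_le_card_of_injOn ρ (fun s hs => ?_) ρ.injective.injOn
  have hf := (mem_filter.mp (isParkingPerm_iff.mp hρ (ρ s))).2.1
  rw [symm_apply_apply] at hf
  simp only [coe_Iic, Set.mem_Iic, coe_filter, mem_univ, true_and, Set.mem_ofPred_eq] at hs ⊢
  exact hf.trans hs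

theorem IsParkingPerm.unique {f : Fin n → Fin n} {ρ ρ' : Perm (Fin n)}
    (hρ : IsParkingPerm f ρ) (hρ' : IsParkingPerm f ρ') : ρ = ρ' :=
  Equiv.ext fun s => Option.some.inj (congrFun (Option.some.inj (hρ.symm.trans hρ')) s)

end Parking

open Classical in
theorem pk_eq_sum_prod_card_admissiblePrefs (n : ℕ) (pats : List (Perm (Fin 3))) :
    pk n pats = ∑ ρ : Perm (Fin n) with AvoidsAll ρ pats, ∏ c, #(admissiblePrefs ρ c) := by
  have hmem : ∀ f : Fin n → Fin n,
      (IsParkingFunction f ∧ ∃ ρ, IsParkingPerm f ρ ∧ AvoidsAll ρ pats) ↔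
        f ∈ (univ.filter (AvoidsAll · pats)).biUnion fun ρ =>
          Fintype.piFinset (admissiblePrefs ρ) := by
    intro f
    simp only [mem_biUnion, mem_filter, mem_univ, true_and, Fintype.mem_piFinset,
      ← isParkingPerm_iff]
    constructor
    · rintro ⟨-, ρ, hρ, hav⟩
      exact ⟨ρ, hav, hρ⟩
    · rintro ⟨ρ, hav, hρ⟩
      exact ⟨hρ.isParkingFunction, ρ, hρ, hav⟩
  rw [pk, Nat.card_congr (Equiv.subtypeEquivRight hmem), Nat.card_eq_finsetCard, card_biUnion]
  · simp_rw [Fintype.card_piFinset]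
  · intro ρ _ ρ' _ hne
    refine disjoint_left.mpr fun f hf hf' => hne ?_
    rw [Fintype.mem_piFinset, ← isParkingPerm_iff] at hf hf'
    exact hf.unique hf'

section Patterns

variable {n : ℕ}

theorem containsPattern_of_forall_lt {m : ℕ} {π : Perm (Fin n)} {σ : Perm (Fin m)}
    {g : Fin m → Fin n} (hg : StrictMono g) (h : ∀ a b, σ a < σ b → π (g a) < π (g b)) :
    ContainsPattern π σ := by
  have hmono : StrictMono (π ∘ g ∘ σ.symm) := fun i j hij => by
    simpa using h (σ.symm i) (σ.symm j) (by simpa using hij)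
  exact ⟨g, hg, fun a b => by simpa using (hmono.lt_iff_lt (a := σ a) (b := σ b)).symm⟩

theorem containsPattern_of_lt_of_lt {π : Perm (Fin n)} {σ : Perm (Fin 3)} {x y z : Fin n}
    (hxy : x < y) (hyz : y < z)
    (h : ∀ a b : Fin 3, σ a < σ b → π (![x, y, z] a) < π (![x, y, z] b)) :
    ContainsPattern π σ := by
  refine containsPattern_of_forall_lt (fun a b hab => ?_) h
  fin_cases a <;> fin_cases b <;> simp at hab ⊢ <;> order

theorem AvoidsAll.strictMono_comp_succ {ρ : Perm (Fin (n + 1))}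
    (h : AvoidsAll ρ [p132, p231, p321]) : StrictMono (ρ ∘ Fin.succ) := by
  intro j k hjk
  by_contra hle
  have hkj : ρ k.succ < ρ j.succ :=
    (not_lt.mp hle).lt_of_ne (ρ.injective.ne (Fin.succ_injective _ |>.ne hjk.ne'))
  have h0j : (0 : Fin (n + 1)) < j.succ := Fin.succ_pos j
  have hjk' : j.succ < k.succ := Fin.succ_lt_succ_iff.mpr hjk
  have h0k : ρ 0 ≠ ρ k.succ := ρ.injective.ne (Fin.succ_ne_zero k).symm
  have h0j' : ρ 0 ≠ ρ j.succ := ρ.injective.ne (Fin.succ_ne_zero j).symm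
  rcases h0k.lt_or_gt with h1 | h1
  · exact h p132 (by simp) (containsPattern_of_lt_of_lt h0j hjk'
      (by intro a b; fin_cases a <;> fin_cases b <;> simp [p132] <;> order))
  rcases h0j'.lt_or_gt with h2 | h2
  · exact h p231 (by simp) (containsPattern_of_lt_of_lt h0j hjk'
      (by intro a b; fin_cases a <;> fin_cases b <;> simp [p231] <;> order))
  · exact h p321 (by simp) (containsPattern_of_lt_of_lt h0j hjk'
      (by intro a b; fin_cases a <;> fin_cases b <;> simp [p321] <;> order))

theorem avoidsAll_of_strictMono_comp_succ {ρ : Perm (Fin (n + 1))}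
    (hρ : StrictMono (ρ ∘ Fin.succ)) : AvoidsAll ρ [p132, p231, p321] := by
  rintro σ hσ ⟨g, hg, hiff⟩
  have h21 : σ 2 < σ 1 := by
    simp only [List.mem_cons, List.not_mem_nil, or_false] at hσ
    rcases hσ with rfl | rfl | rfl <;> decide
  obtain ⟨j, hj⟩ := Fin.exists_succ_eq.mpr (hg (show (0 : Fin 3) < 1 by decide)).ne_bot
  obtain ⟨k, hk⟩ := Fin.exists_succ_eq.mpr (hg (show (0 : Fin 3) < 2 by decide)).ne_bot
  have hjk : j < k := by
    rw [← Fin.succ_lt_succ_iff, hj, hk]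
    exact hg (by decide)
  have := hρ hjk
  simp only [comp_apply, hj, hk] at this
  exact ((hiff 2 1).mp h21).not_gt this

theorem eq_cycleRange_symm_of_strictMono_comp_succ {ρ : Perm (Fin (n + 1))}
    (hρ : StrictMono (ρ ∘ Fin.succ)) : ρ = (ρ 0).cycleRange.symm := by
  have hsucc : ρ ∘ Fin.succ = (ρ 0).succAbove := by
    refine (hρ.range_inj (Fin.strictMono_succAbove _)).mp ?_
    rw [Fin.range_succAbove, Set.range_comp, Fin.range_succ, Set.image_compl_eq ρ.bijective,
      Set.image_singleton]
  ext1 s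
  refine Fin.cases ?_ (fun j => ?_) s
  · simp
  · simp [← hsucc]

theorem avoidsAll_iff_exists_eq_cycleRange_symm {ρ : Perm (Fin (n + 1))} :
    AvoidsAll ρ [p132, p231, p321] ↔ ∃ m : Fin (n + 1), m.cycleRange.symm = ρ := by
  refine ⟨fun h => ⟨ρ 0, ?_⟩, fun ⟨m, hm⟩ => avoidsAll_of_strictMono_comp_succ ?_⟩
  · exact (eq_cycleRange_symm_of_strictMono_comp_succ h.strictMono_comp_succ).symm
  subst hm
  convert Fin.strictMono_succAbove m using 1
  funext j
  simp

end Patterns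

section CycleRange

variable {n : ℕ}

theorem Fin.val_cycleRange_symm (m s : Fin (n + 1)) :
    (m.cycleRange.symm s : ℕ) =
      if s = 0 then (m : ℕ) else if s ≤ m then (s : ℕ) - 1 else s := by
  refine Fin.cases ?_ (fun j => ?_) s
  · simp
  · rw [Fin.cycleRange_symm_succ, if_neg (Fin.succ_ne_zero j), Fin.succAbove]
    split_ifs <;> simp only [Fin.lt_def, Fin.le_def, Fin.val_castSucc, Fin.val_succ] at * <;>
      omega

theorem admissiblePrefs_cycleRange_symm_of_lt {m c : Fin (n + 1)} (h : c < m) :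
    admissiblePrefs m.cycleRange.symm c = Ioc 0 (m.cycleRange c) := by
  have hc : (m.cycleRange c : ℕ) = c + 1 := Fin.coe_cycleRange_of_lt h
  ext x
  simp only [admissiblePrefs, symm_symm, mem_filter, mem_univ, true_and, mem_Ioc]
  refine ⟨fun ⟨hx, hfree⟩ => ⟨?_, hx⟩, fun ⟨h0, hx⟩ => ⟨hx, fun s hxs hs => ?_⟩⟩
  · by_contra! h0
    have := hfree 0 h0 (by simp [Fin.lt_def, hc])
    simp only [Fin.cycleRange_symm_zero] at this
    exact this.not_gt h
  · rw [Fin.lt_def, Fin.val_cycleRange_symm]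
    rw [Fin.lt_def] at h h0 hs
    rw [Fin.le_def] at hxs
    have hs0 : s ≠ 0 := by rintro rfl; simp at h0 hxs; omega
    rw [if_neg hs0]
    split_ifs <;> omega

theorem admissiblePrefs_cycleRange_symm_of_le {m c : Fin (n + 1)} (h : m ≤ c) :
    admissiblePrefs m.cycleRange.symm c = Iic (m.cycleRange c) := by
  ext x
  simp only [admissiblePrefs, symm_symm, mem_filter, mem_univ, true_and, mem_Iic,
    and_iff_left_iff_imp]
  intro _ s _ hs
  rcases h.eq_or_lt with rfl | h
  · simp at hs
  rw [Fin.cycleRange_of_gt h, Fin.lt_def] at hs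
  rw [Fin.lt_def, Fin.val_cycleRange_symm]
  rw [Fin.lt_def] at h
  split_ifs <;> omega

theorem card_admissiblePrefs_cycleRange_symm (m c : Fin (n + 1)) :
    #(admissiblePrefs m.cycleRange.symm c) = if c = m then 1 else (c : ℕ) + 1 := by
  rcases lt_trichotomy c m with h | rfl | h
  · rw [admissiblePrefs_cycleRange_symm_of_lt h, Fin.card_Ioc, Fin.coe_cycleRange_of_lt h,
      if_neg h.ne]
    simp
  · simp [admissiblePrefs_cycleRange_symm_of_le le_rfl]
  · rw [admissiblePrefs_cycleRange_symm_of_le h.le, Fin.card_Iic, Fin.cycleRange_of_gt h,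
      if_neg h.ne']

theorem prod_card_admissiblePrefs_cycleRange_symm_mul (m : Fin (n + 1)) :
    (∏ c, #(admissiblePrefs m.cycleRange.symm c)) * (m + 1) = (n + 1).factorial := by
  rw [← mul_prod_erase univ _ (mem_univ m), card_admissiblePrefs_cycleRange_symm, if_pos rfl,
    one_mul, prod_congr rfl fun c hc => by
      rw [card_admissiblePrefs_cycleRange_symm, if_neg (ne_of_mem_erase hc)],
    mul_comm, mul_prod_erase univ (fun c : Fin (n + 1) => (c : ℕ) + 1) (mem_univ m),
    Fin.prod_univ_eq_prod_range (· + 1), prod_range_add_one_eq_factorial]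

end CycleRange

theorem stmt11 (n : ℕ) (hn : 1 ≤ n) :
    (pk n [p132, p231, p321] : ℚ) =
      ∑ k ∈ Finset.Icc 1 n, (n.factorial : ℚ) / k := by
  classical
  obtain ⟨n, rfl⟩ := Nat.exists_eq_add_of_le' hn
  have havoid : univ.filter (AvoidsAll · [p132, p231, p321]) =
      univ.image fun m : Fin (n + 1) => m.cycleRange.symm := by
    ext ρ
    simp [avoidsAll_iff_exists_eq_cycleRange_symm]
  have hinj : Injective fun m : Fin (n + 1) => m.cycleRange.symm := fun m m' h => by
    simpa using congrArg (· 0) h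
  have hterm (m : Fin (n + 1)) : ((∏ c, #(admissiblePrefs m.cycleRange.symm c) : ℕ) : ℚ) =
      (n + 1).factorial / (m + 1) := by
    rw [eq_div_iff (by positivity), ← prod_card_admissiblePrefs_cycleRange_symm_mul m]
    push_cast
    ring
  rw [pk_eq_sum_prod_card_admissiblePrefs, havoid, sum_image hinj.injOn, Nat.cast_sum]
  simp_rw [hterm]
  rw [Fin.sum_univ_eq_sum_range (fun i => ((n + 1).factorial : ℚ) / (i + 1)), range_eq_Ico,
    ← Ico_add_one_right_eq_Icc, ← sum_Ico_add' _ 0 (n + 1) 1]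
  simp
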